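/- arXiv:1508.06162 — 5 statements merged into one kernel-verified Lean document; each statement's English description precedes it below -/
import Mathlib

section
/- Consider a timed Petri net with free choice and priority routing and a discretization step δ > 0 such that every holding time τ_p is a positive integer multiple of δ. Then the families of pairs ((ρ_p,u_p))_{p∈P}, ((ρ_q,u_q))_{q∈Q} with all ρ_p, ρ_q ≥ 0 that solve the germ system (8a)–(8e) are exactly the affine germs of the stationary solutions of the δ-discretization of the fluid dynamics; precisely: (forward) if functions x_p, z_q : ℝ → ℝ satisfy the δ-discretized fluid equations for all sufficiently large t ∈ δℕ and there exist ρ_p, u_p, ρ_q, u_q ∈ ℝ with ρ_p, ρ_q ≥ 0 such that x_p(t) = u_p + ρ_p·t and z_q(t) = u_q + ρ_q·t for all sufficiently large t ∈ δℕ, then ((ρ_p,u_p), (ρ_q,u_q)) solves the germ system; (converse) if ((ρ_p,u_p), (ρ_q,u_q)) with all ρ_p, ρ_q ≥ 0 solves the germ system, then the step functions defined by x_p(t) = u_p + ρ_p·δ·⌊t/δ⌋ and z_q(t) = u_q + ρ_q·δ·⌊t/δ⌋ satisfy the δ-discretized fluid equations for all sufficiently large t. -/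
open scoped BigOperators

/-- A germ `(ρ, u)` viewed in the tropical semiring of germs `WithTop (ℝ ×ₗ ℝ)`
(lexicographically ordered pairs with a top element adjoined). -/
def germ (v : ℝ × ℝ) : WithTop (ℝ ×ₗ ℝ) := (toLex v : ℝ ×ₗ ℝ)


/-- A timed Petri net with free choice and priority routing (data part).
`inT p` (resp. `outT p`) is the set of input (resp. output) transitions of place `p`,
`τ` are the holding times, `M` the initial markings, `prio` the set of priority places
with distinguished output transitions `plus p` (priority) and `minus p`, and
`π q p` are the routing proportions at free choice places. -/
structure FCPNet where
  P : Type
  Q : Type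
  [finP : Fintype P]
  [finQ : Fintype Q]
  [decP : DecidableEq P]
  [decQ : DecidableEq Q]
  inT : P → Finset Q
  outT : P → Finset Q
  τ : P → ℝ
  M : P → ℕ
  prio : Finset P
  plus : P → Q
  minus : P → Q
  π : Q → P → ℝ

namespace FCPNet

attribute [instance] FCPNet.finP FCPNet.finQ FCPNet.decP FCPNet.decQ

variable (N : FCPNet)

/-- Upstream places `q^in` of a transition `q`. -/
def qIn (q : N.Q) : Finset N.P := Finset.univ.filter fun p => q ∈ N.outT p

/-- Free choice places with at least two output transitions (`P_conflict`). -/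
def conflict : Finset N.P :=
  Finset.univ.filter fun p => p ∉ N.prio ∧ 2 ≤ (N.outT p).card

/-- Transitions all of whose upstream places have a single output transition (`Q_sync`). -/
def sync : Finset N.Q :=
  Finset.univ.filter fun q => ∀ p ∈ N.qIn q, N.outT p = {q}

/-- Structural assumptions: positive holding times; every place is free choice or
priority; priority places have exactly two output transitions; every transition has at
most one upstream priority place; routing proportions at conflict places are positive
and sum to 1. -/
def WellFormed : Prop :=
  (∀ p, 0 < N.τ p) ∧
  (∀ p, p ∉ N.prio → ((N.outT p).card = 1 ∨ ∀ q ∈ N.outT p, N.qIn q = {p})) ∧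
  (∀ p ∈ N.prio, N.plus p ≠ N.minus p ∧ N.outT p = {N.plus p, N.minus p}) ∧
  (∀ q : N.Q, (N.qIn q ∩ N.prio).card ≤ 1) ∧
  (∀ p ∈ N.conflict, (∀ q ∈ N.outT p, 0 < N.π q p) ∧ ∑ q ∈ N.outT p, N.π q p = 1)

/-- The δ-discretized fluid equations (1)–(5) at time `t`, for counter functions
`x p` (places) and `z q` (transitions).  Minima over possibly empty sets of places
are taken in `WithTop ℝ`; an equation whose right-hand side is an empty minimum
(i.e. `⊤`) cannot hold. -/
def fluidEqns (x : N.P → ℝ → ℝ) (z : N.Q → ℝ → ℝ) (δ t : ℝ) : Prop :=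
  -- (1)
  (∀ p, x p t = N.M p + ∑ q ∈ N.inT p, z q t) ∧
  -- (2)
  (∀ p ∈ N.conflict, ∀ q ∈ N.outT p, z q t = N.π q p * x p (t - N.τ p)) ∧
  -- (3)
  (∀ q ∈ N.sync,
    ((z q t : WithTop ℝ)) = (N.qIn q).inf fun p => ((x p (t - N.τ p) : WithTop ℝ))) ∧
  -- (4)
  (∀ p ∈ N.prio,
    ((∃ k : ℕ, t = k * δ) →
      ((z (N.plus p) t : WithTop ℝ)) =
        min ((x p (t - N.τ p) - z (N.minus p) (t - δ) : ℝ) : WithTop ℝ)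
          (((N.qIn (N.plus p)).erase p).inf fun r => ((x r (t - N.τ r) : WithTop ℝ)))) ∧
    ((¬ ∃ k : ℕ, t = k * δ) →
      ((z (N.plus p) t : WithTop ℝ)) =
        min ((x p (t - N.τ p) - z (N.minus p) t : ℝ) : WithTop ℝ)
          (((N.qIn (N.plus p)).erase p).inf fun r => ((x r (t - N.τ r) : WithTop ℝ))))) ∧
  -- (5)
  (∀ p ∈ N.prio,
    ((z (N.minus p) t : WithTop ℝ)) =
      min ((x p (t - N.τ p) - z (N.plus p) t : ℝ) : WithTop ℝ)
        (((N.qIn (N.minus p)).erase p).inf fun r => ((x r (t - N.τ r) : WithTop ℝ))))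

/-- The germ system (8a)–(8e) on affine germs `gP p = (ρ_p, u_p)` and
`gQ q = (ρ_q, u_q)`.  Lexicographic minima over possibly empty sets of places are
taken in `WithTop (ℝ ×ₗ ℝ)`; an equation whose right-hand side is `⊤` cannot hold. -/
def germEqns (gP : N.P → ℝ × ℝ) (gQ : N.Q → ℝ × ℝ) : Prop :=
  -- (8a)
  (∀ p, gP p = ((0 : ℝ), (N.M p : ℝ)) + ∑ q ∈ N.inT p, gQ q) ∧
  -- (8b)
  (∀ p ∈ N.conflict, ∀ q ∈ N.outT p,
    gQ q = (N.π q p * (gP p).1, N.π q p * ((gP p).2 - (gP p).1 * N.τ p))) ∧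
  -- (8c)
  (∀ q ∈ N.sync,
    germ (gQ q) =
      (N.qIn q).inf fun p =>
        germ ((gP p).1, (gP p).2 - (gP p).1 * N.τ p)) ∧
  -- (8d)
  (∀ p ∈ N.prio,
    germ (gQ (N.minus p)) =
      min (germ ((gP p).1 - (gQ (N.plus p)).1,
              (gP p).2 - (gP p).1 * N.τ p - (gQ (N.plus p)).2))
        (((N.qIn (N.minus p)).erase p).inf fun r =>
          germ ((gP r).1, (gP r).2 - (gP r).1 * N.τ r))) ∧
  -- (8e)
  (∀ p ∈ N.prio,
    ((gQ (N.minus p)).1 = 0 →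
      germ (gQ (N.plus p)) =
        min (germ ((gP p).1 - (gQ (N.minus p)).1,
                (gP p).2 - (gP p).1 * N.τ p - (gQ (N.minus p)).2))
          (((N.qIn (N.plus p)).erase p).inf fun r =>
            germ ((gP r).1, (gP r).2 - (gP r).1 * N.τ r))) ∧
    (0 < (gQ (N.minus p)).1 →
      germ (gQ (N.plus p)) =
        ((N.qIn (N.plus p)).erase p).inf fun r =>
          germ ((gP r).1, (gP r).2 - (gP r).1 * N.τ r)))

end FCPNet

/-!
A germ `(ρ, u)` stands for the affine function `s ↦ u + ρ s`, and the lexicographic order on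
germs is the order of these functions at all sufficiently large times. Hence evaluation at
large times commutes with finite minima, and a germ is determined by its values at arbitrarily
large grid times `kδ`. On the grid, and for the step functions everywhere, the fluid equations
only compare such values at times shifted by holding times (multiples of `δ`), so they say that
the germ system holds after evaluation at a large time — except that on the grid (4) reads
`z_{p⁻}` with delay `δ`, i.e. through the germ `(ρ, u - ρδ)`. If `ρ_{p⁻} = 0` this is the
germ of `z_{p⁻}`; if `ρ_{p⁻} > 0` it is strictly smaller, so by (8d) the first term of the minimum in (4) lies
strictly above the germ of `z_{p⁺}` and drops out: this is the case split of (8e).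
-/

open Filter

def affineEval (s : ℝ) : ℝ × ℝ →ₗ[ℝ] ℝ where
  toFun v := v.2 + v.1 * s
  map_add' v w := by simp only [Prod.fst_add, Prod.snd_add]; ring
  map_smul' a v := by simp only [Prod.smul_fst, Prod.smul_snd, smul_eq_mul, RingHom.id_apply]; ring

lemma affineEval_apply (s : ℝ) (v : ℝ × ℝ) : affineEval s v = v.2 + v.1 * s := rfl

lemma affineEval_const (s a : ℝ) : affineEval s (0, a) = a := by
  simp [affineEval_apply]

lemma eq_of_affineEval_eq {s t : ℝ} {v w : ℝ × ℝ} (hst : s ≠ t)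
    (hs : affineEval s v = affineEval s w) (ht : affineEval t v = affineEval t w) : v = w := by
  simp only [affineEval_apply] at hs ht
  have h₁ : v.1 = w.1 := by
    have : (v.1 - w.1) * (s - t) = 0 := by linarith
    simpa [sub_eq_zero, hst] using this
  exact Prod.ext h₁ (by rw [h₁] at hs; linarith)

lemma eventually_affineEval_le {v w : ℝ × ℝ} (h : toLex v ≤ toLex w) :
    ∀ᶠ s in atTop, affineEval s v ≤ affineEval s w := by
  rcases Prod.Lex.toLex_le_toLex.1 h with h₁ | ⟨h₁, h₂⟩
  · filter_upwards [eventually_ge_atTop ((v.2 - w.2) / (w.1 - v.1))] with s hs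
    rw [div_le_iff₀ (sub_pos.2 h₁)] at hs
    simp only [affineEval_apply]
    nlinarith
  · filter_upwards with s
    simp only [affineEval_apply, h₁]
    linarith

/-- The germ of `t ↦ f (t - c)` when `f` has germ `v`. -/
def delay (c : ℝ) (v : ℝ × ℝ) : ℝ × ℝ := (v.1, v.2 - v.1 * c)

lemma affineEval_delay (s c : ℝ) (v : ℝ × ℝ) :
    affineEval s (delay c v) = affineEval (s - c) v := by
  simp only [delay, affineEval_apply]; ring

lemma delay_zero (v : ℝ × ℝ) : delay 0 v = v := by
  simp [delay]

lemma delay_of_fst_eq_zero {v : ℝ × ℝ} (h : v.1 = 0) (c : ℝ) : delay c v = v :=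
  Prod.ext rfl (by simp [delay, h])

lemma toLex_delay_le {c : ℝ} {v : ℝ × ℝ} (hc : 0 ≤ c) (hv : 0 ≤ v.1) :
    toLex (delay c v) ≤ toLex v :=
  Prod.Lex.toLex_le_toLex.2 (.inr ⟨rfl, by simp only [delay]; nlinarith⟩)

lemma toLex_delay_lt {c : ℝ} {v : ℝ × ℝ} (hc : 0 < c) (hv : 0 < v.1) :
    toLex (delay c v) < toLex v :=
  Prod.Lex.toLex_lt_toLex.2 (.inr ⟨rfl, by simp only [delay]; nlinarith⟩)

lemma germ_injective : Function.Injective germ :=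
  WithTop.coe_injective.comp toLex.injective

lemma germ_le_germ {v w : ℝ × ℝ} : germ v ≤ germ w ↔ toLex v ≤ toLex w :=
  WithTop.coe_le_coe

section Priority

variable {a m pl : ℝ × ℝ} {c : ℝ} {I : WithTop (ℝ ×ₗ ℝ)}

lemma germ_eq_of_eq_min_delay (hm : 0 < m.1) (hc : 0 < c) (hd : toLex m ≤ toLex (a - pl))
    (h : germ pl = min (germ (a - delay c m)) I) : germ pl = I := by
  rcases min_choice (germ (a - delay c m)) I with hmin | hmin
  · have hpl : a - pl = delay c m := by
      rw [germ_injective (h.trans hmin), sub_sub_cancel]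
    exact absurd (hpl ▸ hd) (toLex_delay_lt hc hm).not_ge
  · exact h.trans hmin

lemma germ_eq_min_delay_of_eq (hm : 0 ≤ m.1) (hc : 0 ≤ c) (hd : toLex m ≤ toLex (a - pl))
    (h : germ pl = I) : germ pl = min (germ (a - delay c m)) I := by
  have hle : toLex pl ≤ toLex (a - delay c m) := by
    rw [toLex_sub] at hd ⊢
    calc toLex pl ≤ toLex a - toLex m := le_sub_comm.1 hd
      _ ≤ toLex a - toLex (delay c m) := sub_le_sub_left (toLex_delay_le hc hm) _
  rw [← h, min_eq_right (germ_le_germ.2 hle)]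

end Priority

def germEval (s : ℝ) (g : WithTop (ℝ ×ₗ ℝ)) : WithTop ℝ :=
  g.map fun v => affineEval s (ofLex v)

@[simp]
lemma germEval_germ (s : ℝ) (v : ℝ × ℝ) : germEval s (germ v) = affineEval s v := rfl

lemma eventually_germEval_le {g g' : WithTop (ℝ ×ₗ ℝ)} (h : g ≤ g') :
    ∀ᶠ s in atTop, germEval s g ≤ germEval s g' := by
  induction g' using WithTop.recTopCoe with
  | top => exact .of_forall fun _ => le_top
  | coe w =>
    obtain ⟨v, rfl, hvw⟩ := WithTop.le_coe_iff.1 h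
    filter_upwards [eventually_affineEval_le hvw] with s hs
    exact WithTop.coe_le_coe.2 hs

lemma eventually_germEval_min (g g' : WithTop (ℝ ×ₗ ℝ)) :
    ∀ᶠ s in atTop, germEval s (min g g') = min (germEval s g) (germEval s g') := by
  rcases le_total g g' with h | h
  · filter_upwards [eventually_germEval_le h] with s hs
    rw [min_eq_left h, min_eq_left hs]
  · filter_upwards [eventually_germEval_le h] with s hs
    rw [min_eq_right h, min_eq_right hs]

lemma eventually_germEval_finset_inf {ι : Type*} (F : Finset ι) (f : ι → WithTop (ℝ ×ₗ ℝ)) :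
    ∀ᶠ s in atTop, germEval s (F.inf f) = F.inf fun i => germEval s (f i) := by
  classical
  induction F using Finset.induction_on with
  | empty => exact .of_forall fun _ => rfl
  | insert i F _ ih =>
    filter_upwards [ih, eventually_germEval_min (f i) (F.inf f)] with s hF hi
    rw [Finset.inf_insert, Finset.inf_insert, ← hF]
    exact hi

section Limits

variable {α ι : Type*} {l : Filter α} [l.NeBot] {φ : α → ℝ}

lemma eq_of_eventually_germEval_eq (hφ : Tendsto φ l atTop) {g g' : WithTop (ℝ ×ₗ ℝ)}
    (h : ∀ᶠ a in l, germEval (φ a) g = germEval (φ a) g') : g = g' := by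
  obtain ⟨a, ha⟩ := h.exists
  obtain ⟨b, hb, hab⟩ := (h.and (hφ.eventually_gt_atTop (φ a))).exists
  induction g using WithTop.recTopCoe <;> induction g' using WithTop.recTopCoe
  · rfl
  · exact (WithTop.top_ne_coe ha).elim
  · exact (WithTop.coe_ne_top ha).elim
  · congr 1
    exact ofLex.injective (eq_of_affineEval_eq hab.ne (WithTop.coe_injective ha)
      (WithTop.coe_injective hb))

lemma eq_of_eventually_affineEval_eq (hφ : Tendsto φ l atTop) {v w : ℝ × ℝ}
    (h : ∀ᶠ a in l, affineEval (φ a) v = affineEval (φ a) w) : v = w :=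
  germ_injective (eq_of_eventually_germEval_eq hφ (h.mono fun _ ha => congrArg WithTop.some ha))

lemma eq_finset_inf_iff_eventually (hφ : Tendsto φ l atTop) {g : WithTop (ℝ ×ₗ ℝ)}
    {F : Finset ι} {f : ι → WithTop (ℝ ×ₗ ℝ)} :
    g = F.inf f ↔ ∀ᶠ a in l, germEval (φ a) g = F.inf fun i => germEval (φ a) (f i) := by
  refine ⟨fun h => hφ.eventually (h ▸ eventually_germEval_finset_inf F f),
    fun h => eq_of_eventually_germEval_eq hφ ?_⟩
  filter_upwards [h, hφ.eventually (eventually_germEval_finset_inf F f)] with a h₁ h₂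
  rw [h₁, h₂]

lemma eq_min_finset_inf_iff_eventually (hφ : Tendsto φ l atTop) {g g₀ : WithTop (ℝ ×ₗ ℝ)}
    {F : Finset ι} {f : ι → WithTop (ℝ ×ₗ ℝ)} :
    g = min g₀ (F.inf f) ↔ ∀ᶠ a in l,
      germEval (φ a) g = min (germEval (φ a) g₀) (F.inf fun i => germEval (φ a) (f i)) := by
  have hmin : ∀ᶠ a in l, germEval (φ a) (min g₀ (F.inf f)) =
      min (germEval (φ a) g₀) (F.inf fun i => germEval (φ a) (f i)) := by
    filter_upwards [hφ.eventually (eventually_germEval_min g₀ (F.inf f)),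
      hφ.eventually (eventually_germEval_finset_inf F f)] with a h₁ h₂
    rw [h₁, h₂]
  refine ⟨fun h => h ▸ hmin, fun h => eq_of_eventually_germEval_eq hφ ?_⟩
  filter_upwards [h, hmin] with a h₁ h₂
  rw [h₁, h₂]

end Limits

section Grid

variable {δ : ℝ}

lemma eventually_sub_nat_mul_of_eventually {f : ℝ → ℝ} {v : ℝ × ℝ}
    (h : ∀ᶠ k : ℕ in atTop, f (k * δ) = affineEval (k * δ) v) (n : ℕ) :
    ∀ᶠ k : ℕ in atTop, f (k * δ - n * δ) = affineEval (k * δ) (delay (n * δ) v) := by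
  filter_upwards [(tendsto_sub_atTop_nat n).eventually h, eventually_ge_atTop n] with k hk hkn
  have hgrid : ((k - n : ℕ) : ℝ) * δ = k * δ - n * δ := by
    rw [Nat.cast_sub hkn, sub_mul]
  rw [affineEval_delay, ← hgrid, hk]

lemma mul_floor_sub_nat_mul_div (hδ : δ ≠ 0) (t : ℝ) (n : ℕ) :
    δ * ⌊(t - n * δ) / δ⌋ = δ * ⌊t / δ⌋ - n * δ := by
  rw [sub_div, mul_div_cancel_right₀ _ hδ, Int.floor_sub_natCast]
  push_cast
  ring

lemma tendsto_mul_floor_div (hδ : 0 < δ) :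
    Tendsto (fun t => δ * (⌊t / δ⌋ : ℝ)) atTop atTop := by
  refine tendsto_atTop_mono (fun t => ?_) (tendsto_atTop_add_const_right _ (-δ) tendsto_id)
  have := Int.sub_one_lt_floor (t / δ)
  calc t + -δ = δ * (t / δ - 1) := by field_simp; ring
    _ ≤ δ * ⌊t / δ⌋ := by gcongr

end Grid

namespace FCPNet

variable (N : FCPNet)

/-- The germ system with both sides of every equation evaluated at time `s` (minima taken after
evaluation), i.e. the fluid equations for affine counters; `z_{p⁻}` enters the equation of
`p⁺` with delay `c`. -/
def evalEqns (gP : N.P → ℝ × ℝ) (gQ : N.Q → ℝ × ℝ) (c s : ℝ) : Prop :=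
  (∀ p, affineEval s (gP p) = affineEval s ((0, (N.M p : ℝ)) + ∑ q ∈ N.inT p, gQ q)) ∧
  (∀ p ∈ N.conflict, ∀ q ∈ N.outT p,
    affineEval s (gQ q) = affineEval s (N.π q p • delay (N.τ p) (gP p))) ∧
  (∀ q ∈ N.sync,
    germEval s (germ (gQ q)) = (N.qIn q).inf fun p => germEval s (germ (delay (N.τ p) (gP p)))) ∧
  (∀ p ∈ N.prio,
    germEval s (germ (gQ (N.plus p))) =
      min (germEval s (germ (delay (N.τ p) (gP p) - delay c (gQ (N.minus p)))))
        (((N.qIn (N.plus p)).erase p).inf fun r => germEval s (germ (delay (N.τ r) (gP r))))) ∧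
  (∀ p ∈ N.prio,
    germEval s (germ (gQ (N.minus p))) =
      min (germEval s (germ (delay (N.τ p) (gP p) - gQ (N.plus p))))
        (((N.qIn (N.minus p)).erase p).inf fun r => germEval s (germ (delay (N.τ r) (gP r)))))

variable {N} {gP : N.P → ℝ × ℝ} {gQ : N.Q → ℝ × ℝ} {c δ : ℝ}

/-- Off the grid `δℕ`, equation (4) reads `z_{p⁻}` at `t` itself, hence the delay `c = 0`. -/
lemma fluidEqns_iff_evalEqns {x : N.P → ℝ → ℝ} {z : N.Q → ℝ → ℝ} {t s : ℝ}
    (hx : ∀ p, x p t = affineEval s (gP p))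
    (hxτ : ∀ p, x p (t - N.τ p) = affineEval s (delay (N.τ p) (gP p)))
    (hz : ∀ q, z q t = affineEval s (gQ q))
    (hzδ : (∃ k : ℕ, t = k * δ) → ∀ q, z q (t - δ) = affineEval s (delay c (gQ q)))
    (hc : (¬ ∃ k : ℕ, t = k * δ) → c = 0) :
    N.fluidEqns x z δ t ↔ N.evalEqns gP gQ c s := by
  by_cases hgrid : ∃ k : ℕ, t = k * δ
  · simp [fluidEqns, evalEqns, hgrid, hx, hxτ, hz, hzδ hgrid, map_sub, map_sum, map_add,
      affineEval_const]
  · obtain rfl := hc hgrid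
    simp [fluidEqns, evalEqns, hgrid, hx, hxτ, hz, map_sub, map_sum, map_add,
      affineEval_const, delay_zero]

theorem germEqns_of_eventually_evalEqns {α : Type*} {l : Filter α} [l.NeBot] {φ : α → ℝ}
    (hφ : Tendsto φ l atTop) (hc : 0 < c) (h : ∀ᶠ a in l, N.evalEqns gP gQ c (φ a)) :
    N.germEqns gP gQ := by
  have h8d : ∀ p ∈ N.prio, germ (gQ (N.minus p)) =
      min (germ (delay (N.τ p) (gP p) - gQ (N.plus p)))
        (((N.qIn (N.minus p)).erase p).inf fun r => germ (delay (N.τ r) (gP r))) :=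
    fun p hp => (eq_min_finset_inf_iff_eventually hφ).2 (h.mono fun _ ha => ha.2.2.2.2 p hp)
  refine ⟨fun p => eq_of_eventually_affineEval_eq hφ (h.mono fun _ ha => ha.1 p),
    fun p hp q hq => eq_of_eventually_affineEval_eq hφ (h.mono fun _ ha => ha.2.1 p hp q hq),
    fun q hq => (eq_finset_inf_iff_eventually hφ).2 (h.mono fun _ ha => ha.2.2.1 q hq),
    h8d, fun p hp => ?_⟩
  have h4 := (eq_min_finset_inf_iff_eventually hφ).2 (h.mono fun _ ha => ha.2.2.2.1 p hp)
  refine ⟨fun hm => ?_, fun hm => germ_eq_of_eq_min_delay hm hc ?_ h4⟩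
  · rwa [delay_of_fst_eq_zero hm] at h4
  · exact germ_le_germ.1 ((h8d p hp).trans_le (min_le_left _ _))

theorem eventually_evalEqns_of_germEqns (hG : N.germEqns gP gQ)
    (hm : ∀ p ∈ N.prio, 0 ≤ (gQ (N.minus p)).1) (hc : 0 ≤ c) :
    ∀ᶠ s in atTop, N.evalEqns gP gQ c s := by
  obtain ⟨h8a, h8b, h8c, h8d, h8e⟩ := hG
  have h4 : ∀ p ∈ N.prio, germ (gQ (N.plus p)) =
      min (germ (delay (N.τ p) (gP p) - delay c (gQ (N.minus p))))
        (((N.qIn (N.plus p)).erase p).inf fun r => germ (delay (N.τ r) (gP r))) := by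
    intro p hp
    rcases (hm p hp).eq_or_lt with h0 | hpos
    · rw [delay_of_fst_eq_zero h0.symm]
      exact (h8e p hp).1 h0.symm
    · exact germ_eq_min_delay_of_eq (hm p hp) hc
        (germ_le_germ.1 ((h8d p hp).trans_le (min_le_left _ _))) ((h8e p hp).2 hpos)
  filter_upwards [(eventually_all_finset N.sync).2 fun q hq =>
      (eq_finset_inf_iff_eventually tendsto_id).1 (h8c q hq),
    (eventually_all_finset N.prio).2 fun p hp =>
      (eq_min_finset_inf_iff_eventually tendsto_id).1 (h4 p hp),
    (eventually_all_finset N.prio).2 fun p hp =>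
      (eq_min_finset_inf_iff_eventually tendsto_id).1 (h8d p hp)] with s h3 h4 h5
  exact ⟨fun p => congrArg (affineEval s) (h8a p),
    fun p hp q hq => congrArg (affineEval s) (h8b p hp q hq), h3, h4, h5⟩

theorem germEqns_of_eventually_fluidEqns {x : N.P → ℝ → ℝ} {z : N.Q → ℝ → ℝ} (hδ : 0 < δ)
    (hτ : ∀ p, ∃ n : ℕ, N.τ p = n * δ)
    (hF : ∀ᶠ k : ℕ in atTop, N.fluidEqns x z δ (k * δ))
    (hA : ∀ᶠ k : ℕ in atTop, (∀ p, x p (k * δ) = affineEval (k * δ) (gP p)) ∧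
      (∀ q, z q (k * δ) = affineEval (k * δ) (gQ q))) :
    N.germEqns gP gQ := by
  have hx (p) : ∀ᶠ k : ℕ in atTop, x p (k * δ) = affineEval (k * δ) (gP p) :=
    hA.mono fun _ hk => hk.1 p
  have hz (q) : ∀ᶠ k : ℕ in atTop, z q (k * δ) = affineEval (k * δ) (gQ q) :=
    hA.mono fun _ hk => hk.2 q
  have hxτ (p) : ∀ᶠ k : ℕ in atTop,
      x p (k * δ - N.τ p) = affineEval (k * δ) (delay (N.τ p) (gP p)) := by
    obtain ⟨n, hn⟩ := hτ p
    rw [hn]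
    exact eventually_sub_nat_mul_of_eventually (hx p) n
  have hzδ (q) : ∀ᶠ k : ℕ in atTop, z q (k * δ - δ) = affineEval (k * δ) (delay δ (gQ q)) := by
    simpa using eventually_sub_nat_mul_of_eventually (hz q) 1
  refine germEqns_of_eventually_evalEqns (tendsto_natCast_atTop_atTop.atTop_mul_const hδ) hδ ?_
  filter_upwards [hF, eventually_all.2 hx, eventually_all.2 hxτ, eventually_all.2 hz,
    eventually_all.2 hzδ] with k hF hx hxτ hz hzδ
  exact (fluidEqns_iff_evalEqns hx hxτ hz (fun _ => hzδ) fun h => absurd ⟨k, rfl⟩ h).1 hF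

theorem eventually_fluidEqns_floor (hδ : 0 < δ) (hτ : ∀ p, ∃ n : ℕ, N.τ p = n * δ)
    (hm : ∀ p ∈ N.prio, 0 ≤ (gQ (N.minus p)).1) (hG : N.germEqns gP gQ) :
    ∀ᶠ t in atTop, N.fluidEqns (fun p t => affineEval (δ * ⌊t / δ⌋) (gP p))
      (fun q t => affineEval (δ * ⌊t / δ⌋) (gQ q)) δ t := by
  have hstep := tendsto_mul_floor_div hδ
  filter_upwards [hstep.eventually (eventually_evalEqns_of_germEqns hG hm hδ.le),
    hstep.eventually (eventually_evalEqns_of_germEqns hG hm le_rfl)] with t hδt h₀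
  have hsub (n : ℕ) (v : ℝ × ℝ) : affineEval (δ * ⌊(t - n * δ) / δ⌋) v =
      affineEval (δ * ⌊t / δ⌋) (delay (n * δ) v) := by
    rw [mul_floor_sub_nat_mul_div hδ.ne', affineEval_delay]
  have hxτ (p) : affineEval (δ * ⌊(t - N.τ p) / δ⌋) (gP p) =
      affineEval (δ * ⌊t / δ⌋) (delay (N.τ p) (gP p)) := by
    obtain ⟨n, hn⟩ := hτ p
    rw [hn, hsub]
  have hzδ (q) : affineEval (δ * ⌊(t - δ) / δ⌋) (gQ q) =
      affineEval (δ * ⌊t / δ⌋) (delay δ (gQ q)) := by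
    simpa using hsub 1 (gQ q)
  by_cases hgrid : ∃ k : ℕ, t = k * δ
  · exact (fluidEqns_iff_evalEqns (t := t) (fun _ => rfl) hxτ (fun _ => rfl)
      (fun _ => hzδ) fun h => (h hgrid).elim).2 hδt
  · exact (fluidEqns_iff_evalEqns (t := t) (fun _ => rfl) hxτ (fun _ => rfl)
      (fun h => (hgrid h).elim) fun _ => rfl).2 h₀

end FCPNet

theorem stationary_regimes_iff_germ_solutions_general
    (N : FCPNet) (δ : ℝ) (hδ : 0 < δ)
    (hτδ : ∀ p, ∃ n : ℕ, 0 < n ∧ N.τ p = n * δ) :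
    (∀ (x : N.P → ℝ → ℝ) (z : N.Q → ℝ → ℝ) (gP : N.P → ℝ × ℝ) (gQ : N.Q → ℝ × ℝ),
      (∀ p, 0 ≤ (gP p).1) → (∀ q, 0 ≤ (gQ q).1) →
      (∃ T : ℝ, ∀ k : ℕ, T ≤ k * δ → N.fluidEqns x z δ (k * δ)) →
      (∃ T : ℝ, ∀ k : ℕ, T ≤ k * δ →
        (∀ p, x p (k * δ) = (gP p).2 + (gP p).1 * (k * δ)) ∧
        (∀ q, z q (k * δ) = (gQ q).2 + (gQ q).1 * (k * δ))) →
      N.germEqns gP gQ) ∧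
    (∀ (gP : N.P → ℝ × ℝ) (gQ : N.Q → ℝ × ℝ),
      (∀ p, 0 ≤ (gP p).1) → (∀ q, 0 ≤ (gQ q).1) →
      N.germEqns gP gQ →
      ∃ T : ℝ, ∀ t : ℝ, T ≤ t →
        N.fluidEqns (fun p s => (gP p).2 + (gP p).1 * (δ * (⌊s / δ⌋ : ℤ)))
          (fun q s => (gQ q).2 + (gQ q).1 * (δ * (⌊s / δ⌋ : ℤ))) δ t) := by
  have hτ (p) : ∃ n : ℕ, N.τ p = n * δ := (hτδ p).imp fun _ hn => hn.2
  have hgrid : Tendsto (fun k : ℕ => (k : ℝ) * δ) atTop atTop :=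
    tendsto_natCast_atTop_atTop.atTop_mul_const hδ
  refine ⟨fun x z gP gQ _ _ ⟨T, hF⟩ ⟨T', hA⟩ => ?_, fun gP gQ _ hgQ hG => ?_⟩
  · exact N.germEqns_of_eventually_fluidEqns hδ hτ ((hgrid.eventually_ge_atTop T).mono hF)
      ((hgrid.eventually_ge_atTop T').mono hA)
  · exact eventually_atTop.1 (N.eventually_fluidEqns_floor hδ hτ (fun p _ => hgQ _) hG)

/-- Theorem: stationary regimes and the germ system.
For a well-formed timed Petri net with free choice and priority routing whose holding
times are positive integer multiples of a step `δ > 0`: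
(forward) if counter functions satisfy the δ-discretized fluid equations for all
sufficiently large `t ∈ δℕ`, and coincide there with affine functions with
nonnegative slopes, then the corresponding germs solve the germ system (8a)–(8e);
(converse) if germs with nonnegative slopes solve the germ system, then the associated
step functions `t ↦ u + ρ·δ·⌊t/δ⌋` satisfy the δ-discretized fluid equations for all
sufficiently large real `t`. -/
theorem stationary_regimes_iff_germ_solutions
    (N : FCPNet) (hWF : N.WellFormed) (δ : ℝ) (hδ : 0 < δ)
    (hτδ : ∀ p, ∃ n : ℕ, 0 < n ∧ N.τ p = n * δ) :
    (∀ (x : N.P → ℝ → ℝ) (z : N.Q → ℝ → ℝ) (gP : N.P → ℝ × ℝ) (gQ : N.Q → ℝ × ℝ),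
      (∀ p, 0 ≤ (gP p).1) → (∀ q, 0 ≤ (gQ q).1) →
      (∃ T : ℝ, ∀ k : ℕ, T ≤ k * δ → N.fluidEqns x z δ (k * δ)) →
      (∃ T : ℝ, ∀ k : ℕ, T ≤ k * δ →
        (∀ p, x p (k * δ) = (gP p).2 + (gP p).1 * (k * δ)) ∧
        (∀ q, z q (k * δ) = (gQ q).2 + (gQ q).1 * (k * δ))) →
      N.germEqns gP gQ) ∧
    (∀ (gP : N.P → ℝ × ℝ) (gQ : N.Q → ℝ × ℝ),
      (∀ p, 0 ≤ (gP p).1) → (∀ q, 0 ≤ (gQ q).1) →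
      N.germEqns gP gQ →
      ∃ T : ℝ, ∀ t : ℝ, T ≤ t →
        N.fluidEqns (fun p s => (gP p).2 + (gP p).1 * (δ * (⌊s / δ⌋ : ℤ)))
          (fun q s => (gQ q).2 + (gQ q).1 * (δ * (⌊s / δ⌋ : ℤ))) δ t) :=
  stationary_regimes_iff_germ_solutions_general N δ hδ hτδ
end

section
/- Suppose z₁, z₅, z₆ : ℝ → ℝ satisfy the δ-discretized call-center equations for all sufficiently large t ∈ δℕ, and there exist ρ₁, u₁, ρ₅, u₅, ρ₆, u₆ ∈ ℝ with ρ₁, ρ₅, ρ₆ ≥ 0 such that z₁(t) = u₁ + ρ₁·t, z₅(t) = u₅ + ρ₅·t and z₆(t) = u₆ + ρ₆·t for all sufficiently large t ∈ δℕ. Then (ρ₁,u₁,ρ₅,u₅,ρ₆,u₆) is a germ solution of the call-center system. -/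
/-- Lexicographic order on `ℝ × ℝ`. -/
def lexLe (p q : ℝ × ℝ) : Prop := p.1 < q.1 ∨ (p.1 = q.1 ∧ p.2 ≤ q.2)

/-- Strict lexicographic order on `ℝ × ℝ`. -/
def lexLt (p q : ℝ × ℝ) : Prop := lexLe p q ∧ p ≠ q

/-- Lexicographic minimum on `ℝ × ℝ`. -/
noncomputable def lexMin (p q : ℝ × ℝ) : ℝ × ℝ :=
  if p.1 < q.1 ∨ (p.1 = q.1 ∧ p.2 ≤ q.2) then p else q

/-- Parameters of the emergency call center: routing proportions `pe, pu, pa`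
(for extremely urgent, urgent, and advice calls), holding times
`te, tu, ta, ttr, te', tu'`, and staffing levels `N1, N2`. -/
structure CCParams where
  pe : ℝ
  pu : ℝ
  pa : ℝ
  te : ℝ
  tu : ℝ
  ta : ℝ
  ttr : ℝ
  te' : ℝ
  tu' : ℝ
  N1 : ℝ
  N2 : ℝ
  hpe : 0 < pe
  hpu : 0 < pu
  hpa : 0 < pa
  hsum : pe + pu + pa = 1
  hte : 0 < te
  htu : 0 < tu
  hta : 0 < ta
  httr : 0 < ttr
  hte' : 0 < te'
  htu' : 0 < tu'
  hN1 : 0 < N1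
  hN2 : 0 < N2

/-- Average treatment time at level 1. -/
noncomputable def CCParams.tbar (P : CCParams) : ℝ :=
  P.pe * (P.te + P.ttr) + P.pu * P.tu + P.pa * P.ta

/-- First phase transition point. -/
noncomputable def CCParams.r1 (P : CCParams) : ℝ := P.pe * (P.ttr + P.te') / P.tbar

/-- Second phase transition point. -/
noncomputable def CCParams.r2 (P : CCParams) : ℝ :=
  (P.pe * (P.ttr + P.te') + P.pu * P.tu') / P.tbar

/-- A germ solution of the call-center system. -/
noncomputable def CCParams.GermSol (P : CCParams) (ρ1 u1 ρ5 u5 ρ6 u6 : ℝ) : Prop :=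
  0 ≤ ρ1 ∧ 0 ≤ ρ5 ∧ 0 ≤ ρ6 ∧
  -- (a)
  (ρ1, u1) = (ρ5 + P.pu * ρ1 + P.pa * ρ1,
    P.N1 + (u5 - ρ5 * P.ttr) + P.pu * (u1 - ρ1 * P.tu) + P.pa * (u1 - ρ1 * P.ta)) ∧
  -- (b), case ρ6 = 0
  (ρ6 = 0 → (ρ5, u5) = lexMin (ρ5, P.N2 + u5 - ρ5 * (P.ttr + P.te'))
      (P.pe * ρ1, P.pe * (u1 - ρ1 * P.te))) ∧
  -- (b), case ρ6 > 0
  (0 < ρ6 → (ρ5, u5) = (P.pe * ρ1, P.pe * (u1 - ρ1 * P.te))) ∧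
  -- (c)
  (ρ6, u6) = lexMin (ρ6, P.N2 - ρ5 * (P.ttr + P.te') + u6 - ρ6 * P.tu')
      (P.pu * ρ1, P.pu * (u1 - ρ1 * P.tu))

/-- The δ-discretized call-center equations at time `t`. -/
noncomputable def CCParams.Eqns (P : CCParams) (z1 z5 z6 : ℝ → ℝ) (δ t : ℝ) : Prop :=
  z1 t = P.N1 + z5 (t - P.ttr) + P.pu * z1 (t - P.tu) + P.pa * z1 (t - P.ta) ∧
  z5 t = min (P.N2 + z5 (t - P.ttr - P.te') + z6 (t - P.tu') - z6 (t - δ))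
      (P.pe * z1 (t - P.te)) ∧
  z6 t = min (P.N2 + z5 (t - P.ttr - P.te') + z6 (t - P.tu') - z5 t)
      (P.pu * z1 (t - P.tu))

/-!
On the grid `δℕ` every delay is a whole number of steps, so far out the affine germs can be
substituted into the equations, which then become identities between affine functions of `t`,
some of them inside a `min`. An affine function is determined by its values at two grid points,
and for large `t` the minimum of two affine functions is the one whose (slope, intercept) is
lexicographically smaller; this gives (a) and (c) and the lexicographic form of (b). When
`ρ₆ > 0`, (c) forces `N₂ - ρ₅(τ_tr + τ_ext') - ρ₆τ_ur' ≥ 0`, so the first argument of the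
minimum in (b) exceeds `u₅` by at least `ρ₆δ > 0`, and the minimum must be the second one.
-/

open Filter

def germFun (p : ℝ × ℝ) (t : ℝ) : ℝ := p.2 + p.1 * t

section Lex

variable {p q : ℝ × ℝ}

lemma lexLe_of_not_lexLe (h : ¬ lexLe p q) : lexLe q p := by
  rcases lt_trichotomy p.1 q.1 with hlt | heq | hgt
  · exact absurd (Or.inl hlt) h
  · exact Or.inr ⟨heq.symm, (not_le.1 fun hle => h (Or.inr ⟨heq, hle⟩)).le⟩
  · exact Or.inl hgt

lemma lexMin_of_lexLe (h : lexLe p q) : lexMin p q = p := if_pos h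

lemma lexMin_of_not_lexLe (h : ¬ lexLe p q) : lexMin p q = q := if_neg h

lemma lexMin_eq_right_of_ne_left (h : lexMin p q ≠ p) : lexMin p q = q :=
  lexMin_of_not_lexLe fun hpq => h (lexMin_of_lexLe hpq)

lemma lexLe_lexMin_left : lexLe (lexMin p q) p := by
  by_cases h : lexLe p q
  · rw [lexMin_of_lexLe h]
    exact Or.inr ⟨rfl, le_rfl⟩
  · rw [lexMin_of_not_lexLe h]
    exact lexLe_of_not_lexLe h

end Lex

lemma eventually_germFun_le_of_lexLe {p q : ℝ × ℝ} (h : lexLe p q) :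
    ∀ᶠ t in atTop, germFun p t ≤ germFun q t := by
  unfold germFun
  rcases h with hlt | ⟨heq, hle⟩
  · filter_upwards [eventually_ge_atTop ((p.2 - q.2) / (q.1 - p.1))] with t ht
    rw [div_le_iff₀ (sub_pos.2 hlt)] at ht
    linarith
  · exact Eventually.of_forall fun t => by rw [heq]; linarith

lemma eventually_min_germFun (p q : ℝ × ℝ) :
    ∀ᶠ t in atTop, min (germFun p t) (germFun q t) = germFun (lexMin p q) t := by
  by_cases h : lexLe p q
  · filter_upwards [eventually_germFun_le_of_lexLe h] with t ht
    rw [lexMin_of_lexLe h, min_eq_left ht]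
  · filter_upwards [eventually_germFun_le_of_lexLe (lexLe_of_not_lexLe h)] with t ht
    rw [lexMin_of_not_lexLe h, min_eq_right ht]

section Grid

variable {δ : ℝ}

lemma eventually_atTop_of_exists_grid (hδ : 0 < δ) {Q : ℕ → Prop}
    (h : ∃ T : ℝ, ∀ k : ℕ, T ≤ k * δ → Q k) : ∀ᶠ k : ℕ in atTop, Q k := by
  obtain ⟨T, hT⟩ := h
  exact ((tendsto_natCast_atTop_atTop.atTop_mul_const hδ).eventually_ge_atTop T).mono hT

lemma Filter.Eventually.grid_sub {z g : ℝ → ℝ} {τ : ℝ}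
    (h : ∀ᶠ k : ℕ in atTop, z (k * δ) = g (k * δ)) (hτ : ∃ m : ℕ, τ = m * δ) :
    ∀ᶠ k : ℕ in atTop, z (k * δ - τ) = g (k * δ - τ) := by
  obtain ⟨m, rfl⟩ := hτ
  filter_upwards [(tendsto_sub_atTop_nat m).eventually h, eventually_ge_atTop m] with k hk hmk
  rwa [Nat.cast_sub hmk, sub_mul] at hk

lemma eq_of_eventually_germFun_grid_eq (hδ : δ ≠ 0) {p q : ℝ × ℝ}
    (h : ∀ᶠ k : ℕ in atTop, germFun p (k * δ) = germFun q (k * δ)) : p = q := by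
  obtain ⟨N, hN⟩ := eventually_atTop.1 h
  have h₀ := hN N le_rfl
  have h₁ := hN (N + 1) N.le_succ
  simp only [germFun, Nat.cast_succ] at h₀ h₁
  have hslope : p.1 = q.1 := mul_right_cancel₀ hδ (by linarith)
  exact Prod.ext hslope (by rw [hslope] at h₀; linarith)

lemma eq_lexMin_of_eventually_germFun_grid_eq_min (hδ : 0 < δ) {r p q : ℝ × ℝ}
    (h : ∀ᶠ k : ℕ in atTop, germFun r (k * δ) = min (germFun p (k * δ)) (germFun q (k * δ))) :
    r = lexMin p q := by
  have hmin := (tendsto_natCast_atTop_atTop.atTop_mul_const hδ).eventually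
    (eventually_min_germFun p q)
  exact eq_of_eventually_germFun_grid_eq hδ.ne' ((h.and hmin).mono fun _ hk => hk.1.trans hk.2)

end Grid

lemma CCParams.germSol_of_eventually_eqns (P : CCParams) {δ ρ1 u1 ρ5 u5 ρ6 u6 : ℝ}
    (hδ : 0 < δ) (hρ1 : 0 ≤ ρ1) (hρ5 : 0 ≤ ρ5) (hρ6 : 0 ≤ ρ6)
    (h : ∀ᶠ k : ℕ in atTop,
      P.Eqns (germFun (ρ1, u1)) (germFun (ρ5, u5)) (germFun (ρ6, u6)) δ (k * δ)) :
    P.GermSol ρ1 u1 ρ5 u5 ρ6 u6 := by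
  have ha : (ρ1, u1) = (ρ5 + P.pu * ρ1 + P.pa * ρ1,
      P.N1 + (u5 - ρ5 * P.ttr) + P.pu * (u1 - ρ1 * P.tu) + P.pa * (u1 - ρ1 * P.ta)) :=
    eq_of_eventually_germFun_grid_eq hδ.ne' <| h.mono fun k hk => by
      rw [hk.1]; simp only [germFun]; ring
  have hb : (ρ5, u5) = lexMin (ρ5, P.N2 + u5 - ρ5 * (P.ttr + P.te') + ρ6 * (δ - P.tu'))
      (P.pe * ρ1, P.pe * (u1 - ρ1 * P.te)) :=
    eq_lexMin_of_eventually_germFun_grid_eq_min hδ <| h.mono fun k hk => by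
      rw [hk.2.1]; simp only [germFun]; congr 1 <;> ring
  have hc : (ρ6, u6) = lexMin (ρ6, P.N2 - ρ5 * (P.ttr + P.te') + u6 - ρ6 * P.tu')
      (P.pu * ρ1, P.pu * (u1 - ρ1 * P.tu)) :=
    eq_lexMin_of_eventually_germFun_grid_eq_min hδ <| h.mono fun k hk => by
      rw [hk.2.2]; simp only [germFun]; congr 1 <;> ring
  refine ⟨hρ1, hρ5, hρ6, ha, fun h0 => by simpa [h0] using hb, fun hpos => ?_, hc⟩
  have hslack : 0 ≤ P.N2 - ρ5 * (P.ttr + P.te') - ρ6 * P.tu' := by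
    rcases hc ▸ lexLe_lexMin_left with hlt | ⟨-, hle⟩
    · exact absurd hlt (lt_irrefl ρ6)
    · linarith
  rw [hb]
  refine lexMin_eq_right_of_ne_left fun hmin => ?_
  have hu5 := congrArg Prod.snd (hb.trans hmin)
  nlinarith [mul_pos hpos hδ]

/-- if `z₁, z₅, z₆` satisfy the δ-discretized call-center equations for all
sufficiently large `t ∈ δℕ` and are affine with germs `(ρᵢ, uᵢ)` (with `ρᵢ ≥ 0`) on all
sufficiently large `t ∈ δℕ`, then `(ρ₁,u₁,ρ₅,u₅,ρ₆,u₆)` is a germ solution. -/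
theorem germ_of_stationary_solution (P : CCParams) (δ : ℝ) (hδ : 0 < δ)
    (hmte : ∃ n : ℕ, 0 < n ∧ P.te = n * δ)
    (hmtu : ∃ n : ℕ, 0 < n ∧ P.tu = n * δ)
    (hmta : ∃ n : ℕ, 0 < n ∧ P.ta = n * δ)
    (hmttr : ∃ n : ℕ, 0 < n ∧ P.ttr = n * δ)
    (hmte' : ∃ n : ℕ, 0 < n ∧ P.te' = n * δ)
    (hmtu' : ∃ n : ℕ, 0 < n ∧ P.tu' = n * δ)
    (z1 z5 z6 : ℝ → ℝ)
    (heqns : ∃ T : ℝ, ∀ k : ℕ, T ≤ k * δ → P.Eqns z1 z5 z6 δ (k * δ))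
    (ρ1 u1 ρ5 u5 ρ6 u6 : ℝ)
    (hρ1 : 0 ≤ ρ1) (hρ5 : 0 ≤ ρ5) (hρ6 : 0 ≤ ρ6)
    (hgerm : ∃ T : ℝ, ∀ k : ℕ, T ≤ k * δ →
      z1 (k * δ) = u1 + ρ1 * (k * δ) ∧
      z5 (k * δ) = u5 + ρ5 * (k * δ) ∧
      z6 (k * δ) = u6 + ρ6 * (k * δ)) :
    P.GermSol ρ1 u1 ρ5 u5 ρ6 u6 := by
  obtain ⟨me, -, hte⟩ := hmte
  obtain ⟨mu, -, htu⟩ := hmtu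
  obtain ⟨ma, -, hta⟩ := hmta
  obtain ⟨mtr, -, httr⟩ := hmttr
  obtain ⟨me', -, hte'⟩ := hmte'
  obtain ⟨mu', -, htu'⟩ := hmtu'
  have hz := eventually_atTop_of_exists_grid hδ hgerm
  have hz1 : ∀ᶠ k : ℕ in atTop, z1 (k * δ) = germFun (ρ1, u1) (k * δ) := hz.mono fun _ h => h.1
  have hz5 : ∀ᶠ k : ℕ in atTop, z5 (k * δ) = germFun (ρ5, u5) (k * δ) :=
    hz.mono fun _ h => h.2.1
  have hz6 : ∀ᶠ k : ℕ in atTop, z6 (k * δ) = germFun (ρ6, u6) (k * δ) :=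
    hz.mono fun _ h => h.2.2
  refine P.germSol_of_eventually_eqns hδ hρ1 hρ5 hρ6 ?_
  filter_upwards [eventually_atTop_of_exists_grid hδ heqns, hz1, hz1.grid_sub ⟨mu, htu⟩,
    hz1.grid_sub ⟨ma, hta⟩, hz1.grid_sub ⟨me, hte⟩, hz5, hz5.grid_sub ⟨mtr, httr⟩,
    hz5.grid_sub (τ := P.ttr + P.te') ⟨mtr + me', by rw [httr, hte']; push_cast; ring⟩,
    hz6, hz6.grid_sub ⟨mu', htu'⟩, hz6.grid_sub (τ := δ) ⟨1, by rw [Nat.cast_one, one_mul]⟩]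
    with k hE h1 h1tu h1ta h1te h5 h5tr h5tre h6 h6tu h6δ
  simp only [CCParams.Eqns, sub_sub] at hE ⊢
  rwa [h1, h1tu, h1ta, h1te, h5, h5tr, h5tre, h6, h6tu, h6δ] at hE
end

section
/- Every germ solution of the call-center system satisfies ρ₅ = π_ext·ρ₁ and 0 ≤ ρ₆ ≤ π_ur·ρ₁. -/
theorem lexMin_fst_le_right (p q : ℝ × ℝ) : (lexMin p q).1 ≤ q.1 := by
  unfold lexMin
  split_ifs with h
  · rcases h with h | h
    · exact h.le
    · exact h.1.le
  · exact le_rfl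

/-- every germ solution satisfies `ρ₅ = π_ext·ρ₁` and `0 ≤ ρ₆ ≤ π_ur·ρ₁`. -/
theorem germ_rho5_rho6 (P : CCParams) (ρ1 u1 ρ5 u5 ρ6 u6 : ℝ)
    (hsol : P.GermSol ρ1 u1 ρ5 u5 ρ6 u6) :
    ρ5 = P.pe * ρ1 ∧ 0 ≤ ρ6 ∧ ρ6 ≤ P.pu * ρ1 := by
  obtain ⟨-, -, hρ6, hlevel1, -, -, hurgent⟩ := hsol
  have hρ1 : ρ1 = ρ5 + P.pu * ρ1 + P.pa * ρ1 := congrArg Prod.fst hlevel1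
  have hρ6_le : ρ6 ≤ P.pu * ρ1 :=
    (congrArg Prod.fst hurgent).trans_le (lexMin_fst_le_right _ _)
  have hρ5 : ρ5 = P.pe * ρ1 := by linear_combination -hρ1 - ρ1 * P.hsum
  exact ⟨hρ5, hρ6, hρ6_le⟩
end

section
/- Let (ρ₁,u₁,ρ₅,u₅,ρ₆,u₆) be a germ solution of the call-center system with ρ₁ > 0 and ρ₆ = 0. Then ρ₁ = N₂/(π_ext·(τ_tr + τ_ext')), ρ₅ = N₂/(τ_tr + τ_ext'), and N₂/N₁ ≤ r₁. -/
/-! With `ρ₆ = 0 < π_ur·ρ₁`, the lexicographic minimum in (c) selects its first argument, which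
forces `ρ₅ (τ_tr + τ_ext') = N₂`; the first coordinate of (a) gives `ρ₅ = π_ext ρ₁`. The first
argument in (b) is then `(ρ₅, u₅)` itself and ties with the second in the first coordinate, so
(b) yields `u₅ ≤ π_ext (u₁ - ρ₁ τ_ext)`. Substituted into the second coordinate of (a) this gives
`ρ₁ τ̄ ≤ N₁`, i.e. `N₂ / N₁ ≤ r₁`. -/

theorem lexMin_of_fst_lt {p q : ℝ × ℝ} (h : p.1 < q.1) : lexMin p q = p :=
  if_pos (Or.inl h)

theorem lexLe_lexMin_right (p q : ℝ × ℝ) : lexLe (lexMin p q) q := by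
  unfold lexMin lexLe
  split_ifs with h
  · exact h
  · exact Or.inr ⟨rfl, le_rfl⟩

theorem lexLe_mk_left_iff {a b c : ℝ} : lexLe (a, b) (a, c) ↔ b ≤ c := by
  simp [lexLe]

theorem CCParams.tbar_pos (P : CCParams) : 0 < P.tbar := by
  have := P.hpe; have := P.hpu; have := P.hpa
  have := P.hte; have := P.httr; have := P.htu; have := P.hta
  unfold CCParams.tbar
  positivity

namespace CCParams.GermSol

variable {P : CCParams} {ρ1 u1 ρ5 u5 ρ6 u6 : ℝ}

theorem rho5_eq_pe_mul (h : P.GermSol ρ1 u1 ρ5 u5 ρ6 u6) : ρ5 = P.pe * ρ1 := by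
  obtain ⟨-, -, -, ha, -⟩ := h
  linear_combination -(Prod.mk.inj ha).1 - ρ1 * P.hsum

theorem rho5_mul_eq_N2 (h : P.GermSol ρ1 u1 ρ5 u5 ρ6 u6) (hρ1 : 0 < ρ1) (hρ6 : ρ6 = 0) :
    ρ5 * (P.ttr + P.te') = P.N2 := by
  obtain ⟨-, -, -, -, -, -, hc⟩ := h
  subst hρ6
  rw [lexMin_of_fst_lt (mul_pos P.hpu hρ1)] at hc
  linarith [(Prod.mk.inj hc).2]

theorem u5_le_pe_mul (h : P.GermSol ρ1 u1 ρ5 u5 ρ6 u6) (hρ1 : 0 < ρ1) (hρ6 : ρ6 = 0) :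
    u5 ≤ P.pe * (u1 - ρ1 * P.te) := by
  have hload := h.rho5_mul_eq_N2 hρ1 hρ6
  have hρ5 := h.rho5_eq_pe_mul
  obtain ⟨-, -, -, -, hb, -⟩ := h
  rw [show P.N2 + u5 - ρ5 * (P.ttr + P.te') = u5 by linarith, ← hρ5] at hb
  exact lexLe_mk_left_iff.mp (hb hρ6 ▸ lexLe_lexMin_right _ _)

theorem rho1_mul_tbar_le_N1 (h : P.GermSol ρ1 u1 ρ5 u5 ρ6 u6)
    (hu5 : u5 ≤ P.pe * (u1 - ρ1 * P.te)) : ρ1 * P.tbar ≤ P.N1 := by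
  have hρ5 := h.rho5_eq_pe_mul
  obtain ⟨-, -, -, ha, -⟩ := h
  unfold CCParams.tbar
  linear_combination hu5 + (Prod.mk.inj ha).2 + u1 * P.hsum - P.ttr * hρ5

end CCParams.GermSol

/-- in a germ solution with `ρ₁ > 0` and `ρ₆ = 0`, we have
`ρ₁ = N₂/(π_ext·(τ_tr + τ_ext'))`, `ρ₅ = N₂/(τ_tr + τ_ext')` and `N₂/N₁ ≤ r₁`. -/
theorem germ_phase_low (P : CCParams) (ρ1 u1 ρ5 u5 ρ6 u6 : ℝ)
    (hsol : P.GermSol ρ1 u1 ρ5 u5 ρ6 u6) (hρ1 : 0 < ρ1) (hρ6 : ρ6 = 0) :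
    ρ1 = P.N2 / (P.pe * (P.ttr + P.te')) ∧
    ρ5 = P.N2 / (P.ttr + P.te') ∧
    P.N2 / P.N1 ≤ P.r1 := by
  have hρ5 := hsol.rho5_eq_pe_mul
  have hload := hsol.rho5_mul_eq_N2 hρ1 hρ6
  have hwork := hsol.rho1_mul_tbar_le_N1 (hsol.u5_le_pe_mul hρ1 hρ6)
  have hd : 0 < P.ttr + P.te' := add_pos P.httr P.hte'
  have hpd : 0 < P.pe * (P.ttr + P.te') := mul_pos P.hpe hd
  have hN2 : P.N2 = ρ1 * (P.pe * (P.ttr + P.te')) := by rw [← hload, hρ5]; ring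
  refine ⟨(eq_div_iff hpd.ne').mpr hN2.symm, (eq_div_iff hd.ne').mpr hload, ?_⟩
  rw [CCParams.r1, div_le_div_iff₀ P.hN1 P.tbar_pos]
  calc P.N2 * P.tbar = ρ1 * P.tbar * (P.pe * (P.ttr + P.te')) := by rw [hN2]; ring
    _ ≤ P.N1 * (P.pe * (P.ttr + P.te')) := by gcongr
    _ = P.pe * (P.ttr + P.te') * P.N1 := mul_comm _ _
end

section
/- Let (ρ₁,u₁,ρ₅,u₅,ρ₆,u₆) be a germ solution of the call-center system with ρ₆ > 0. Then ρ₁ = N₁/τ̄ and ρ₅ = π_ext·N₁/τ̄. -/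
/-! With `ρ₆ > 0`, clause (b) makes `(ρ₅, u₅)` exactly the extremely urgent share of the level-1
output. Substituted into the level-1 equation (a), the terms in `u₁` cancel because
`π_ext + π_ur + π_adv = 1`, leaving the balance `ρ₁ τ̄ = N₁`. -/

namespace CCParams

variable (P : CCParams)

theorem tbar_pos_s6 : 0 < P.tbar := by
  have := P.hpe; have := P.hpu; have := P.hpa
  have := P.hte; have := P.htu; have := P.hta; have := P.httr
  unfold tbar
  positivity

theorem mul_tbar_eq_N1 {ρ1 u1 ρ5 u5 : ℝ}
    (hu1 : u1 = P.N1 + (u5 - ρ5 * P.ttr) + P.pu * (u1 - ρ1 * P.tu) + P.pa * (u1 - ρ1 * P.ta))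
    (hρ5 : ρ5 = P.pe * ρ1) (hu5 : u5 = P.pe * (u1 - ρ1 * P.te)) :
    ρ1 * P.tbar = P.N1 := by
  unfold tbar
  linear_combination hu1 + hu5 - P.ttr * hρ5 + u1 * P.hsum

variable {P}

theorem GermSol.rho5_eq_of_rho6_pos {ρ1 u1 ρ5 u5 ρ6 u6 : ℝ}
    (hsol : P.GermSol ρ1 u1 ρ5 u5 ρ6 u6) (hρ6 : 0 < ρ6) : ρ5 = P.pe * ρ1 := by
  obtain ⟨-, -, -, -, -, hb, -⟩ := hsol
  exact (Prod.mk.inj (hb hρ6)).1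

theorem GermSol.mul_tbar_eq_N1_of_rho6_pos {ρ1 u1 ρ5 u5 ρ6 u6 : ℝ}
    (hsol : P.GermSol ρ1 u1 ρ5 u5 ρ6 u6) (hρ6 : 0 < ρ6) : ρ1 * P.tbar = P.N1 := by
  obtain ⟨-, -, -, ha, -, hb, -⟩ := hsol
  obtain ⟨-, hu1⟩ := Prod.mk.inj ha
  obtain ⟨hρ5, hu5⟩ := Prod.mk.inj (hb hρ6)
  exact P.mul_tbar_eq_N1 hu1 hρ5 hu5

end CCParams

/-- in a germ solution with `ρ₆ > 0`, we have `ρ₁ = N₁/τ̄` and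
`ρ₅ = π_ext·N₁/τ̄`. -/
theorem germ_rho6_pos (P : CCParams) (ρ1 u1 ρ5 u5 ρ6 u6 : ℝ)
    (hsol : P.GermSol ρ1 u1 ρ5 u5 ρ6 u6) (hρ6 : 0 < ρ6) :
    ρ1 = P.N1 / P.tbar ∧ ρ5 = P.pe * P.N1 / P.tbar := by
  have hρ1 : ρ1 = P.N1 / P.tbar := by
    rw [eq_div_iff P.tbar_pos_s6.ne', hsol.mul_tbar_eq_N1_of_rho6_pos hρ6]
  exact ⟨hρ1, by rw [hsol.rho5_eq_of_rho6_pos hρ6, hρ1, mul_div_assoc]⟩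
end
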